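/- arXiv:2103.10800 — 5 statements merged into one kernel-verified Lean document; each statement's English description precedes it below -/
import Mathlib

section
/- There is, up to scalar multiple, a unique 2×2 matrix A over ℂ(q^{1/2}) that commutes with T_q = [[q,1],[0,1]] up to a scalar and whose associated Möbius transformation sends -i·q^{-1/2} to i·q^{-1/2}; it is A = [[1 + i(q^{1/2} - q^{-1/2}), 2i·q^{-1/2}], [0, 1 - i(q^{1/2} - q^{-1/2})]]. -/
/-!
Conjugation by `T = [[q,1],[0,1]]` multiplies `A` by `λ`. If `A 1 0 ≠ 0` this forces `λ q = 1`
and, for `q ≠ -1`, makes the rows of `A` proportional with ratio `1 - q`: the Möbius map of `A`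
is then the constant `1 / (1 - q)`, which is not `[i]_q`. So `A` is upper triangular, its
lower right entry is the (nonzero) Möbius denominator, hence `λ = 1` and `A = α + β T` lies in
the commutant of `T`. Sending `x` to `y` is one linear condition on `(α, β)`, with solution
`(q x + 1 - y, y - x)`; for `x = [-i]_q`, `y = [i]_q` this is `(U²)_q`.
-/

set_option synthInstance.maxHeartbeats 1000000
set_option maxHeartbeats 1000000

noncomputable section

/-- The imaginary unit as a constant of `ℂ(t)`, `t = q^{1/2}`. -/
def ci : RatFunc ℂ := RatFunc.C Complex.I

/-- `t = q^{1/2}`, the generator of `ℂ(t)`. -/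
def tt : RatFunc ℂ := RatFunc.X

/-- `T_q = [[q,1],[0,1]]` with `q = t²`. -/
def Tq : Matrix (Fin 2) (Fin 2) (RatFunc ℂ) := !![tt ^ 2, 1; 0, 1]

/-- The matrix `(U²)_q`. -/
def U2q : Matrix (Fin 2) (Fin 2) (RatFunc ℂ) :=
  !![1 + ci * (tt - tt⁻¹), 2 * ci * tt⁻¹; 0, 1 - ci * (tt - tt⁻¹)]

section

variable {K : Type*} [Field K]

def affineMatrix (q : K) : Matrix (Fin 2) (Fin 2) K := !![q, 1; 0, 1]

def CommutesUpToScalar (T A : Matrix (Fin 2) (Fin 2) K) : Prop :=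
  ∃ lam : K, lam ≠ 0 ∧ T * A = lam • (A * T)

def MobiusMapsTo (A : Matrix (Fin 2) (Fin 2) K) (x y : K) : Prop :=
  A 1 0 * x + A 1 1 ≠ 0 ∧ A 0 0 * x + A 0 1 = y * (A 1 0 * x + A 1 1)

/-- `(q x + 1 - y) • 1 + (y - x) • affineMatrix q`: the combination of `1` and `affineMatrix q`
whose Möbius map sends `x` to `y`. -/
def commutantMatrix (q x y : K) : Matrix (Fin 2) (Fin 2) K :=
  !![(q - 1) * y + 1, y - x; 0, (q - 1) * x + 1]

theorem affineMatrix_mul_eq_smul_mul_iff {q lam : K} {A : Matrix (Fin 2) (Fin 2) K} :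
    affineMatrix q * A = lam • (A * affineMatrix q) ↔
      q * A 0 0 + A 1 0 = lam * (A 0 0 * q) ∧ q * A 0 1 + A 1 1 = lam * (A 0 0 + A 0 1) ∧
        A 1 0 = lam * (A 1 0 * q) ∧ A 1 1 = lam * (A 1 0 + A 1 1) := by
  rw [← Matrix.ext_iff]
  simp [Fin.forall_fin_two, affineMatrix, Matrix.mul_apply, Fin.sum_univ_two, and_assoc]

theorem row_one_eq_one_sub_mul_row_zero {q lam : K} {A : Matrix (Fin 2) (Fin 2) K}
    (hq : q ≠ -1) (hA : affineMatrix q * A = lam • (A * affineMatrix q)) (he : A 1 0 ≠ 0) :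
    A 1 0 = (1 - q) * A 0 0 ∧ A 1 1 = (1 - q) * A 0 1 := by
  obtain ⟨h00, h01, h10, h11⟩ := affineMatrix_mul_eq_smul_mul_iff.mp hA
  have hlam : lam * q = 1 :=
    mul_right_cancel₀ he (by linear_combination -h10)
  have he_a : A 1 0 = (1 - q) * A 0 0 := by linear_combination h00 + A 0 0 * hlam
  have he_d : A 1 0 = (q - 1) * A 1 1 := by linear_combination -q * h11 - (A 1 0 + A 1 1) * hlam
  have hq1 : q - 1 ≠ 0 := by
    intro h
    exact he (by rw [he_d, h, zero_mul])
  have had : A 0 0 = -A 1 1 :=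
    mul_left_cancel₀ hq1 (by linear_combination he_a - he_d)
  have hq2 : q + 1 ≠ 0 := fun h => hq (eq_neg_of_add_eq_zero_left h)
  refine ⟨he_a, mul_left_cancel₀ hq2 ?_⟩
  linear_combination q * h01 + (A 0 0 + A 0 1) * hlam + had

theorem exists_eq_smul_commutantMatrix {q x y : K} {A : Matrix (Fin 2) (Fin 2) K}
    (hq : q ≠ -1) (hy : (q - 1) * y + 1 ≠ 0) (hx : (q - 1) * x + 1 ≠ 0)
    (hcomm : CommutesUpToScalar (affineMatrix q) A) (hmaps : MobiusMapsTo A x y) :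
    ∃ c : K, c ≠ 0 ∧ A = c • commutantMatrix q x y := by
  obtain ⟨lam, -, hA⟩ := hcomm
  obtain ⟨hden, hnum⟩ := hmaps
  have he : A 1 0 = 0 := by
    by_contra he
    obtain ⟨h0, h1⟩ := row_one_eq_one_sub_mul_row_zero hq hA he
    exact hy (mul_right_cancel₀ hden (by linear_combination (1 - q) * hnum + x * h0 + h1))
  obtain ⟨-, h01, -, h11⟩ := affineMatrix_mul_eq_smul_mul_iff.mp hA
  rw [he, zero_mul, zero_add] at hden hnum
  have hlam : lam = 1 := mul_right_cancel₀ hden (by linear_combination -h11 - lam * he)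
  have hdiag : A 0 0 = A 1 1 + (q - 1) * A 0 1 := by
    linear_combination -h01 - (A 0 0 + A 0 1) * hlam
  obtain ⟨c, hc⟩ : ∃ c, c * ((q - 1) * x + 1) = A 1 1 := ⟨_, div_mul_cancel₀ _ hx⟩
  have hb : A 0 1 = c * (y - x) :=
    mul_right_cancel₀ hx (by linear_combination hnum - x * hdiag - (y - x) * hc)
  refine ⟨c, left_ne_zero_of_mul (hc ▸ hden), ?_⟩
  rw [← Matrix.ext_iff]
  simp only [Fin.forall_fin_two, commutantMatrix, Matrix.smul_apply, smul_eq_mul, Matrix.of_apply,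
    Matrix.cons_val', Matrix.cons_val_zero, Matrix.cons_val_one, Matrix.empty_val',
    Matrix.cons_val_fin_one, mul_zero]
  exact ⟨⟨by linear_combination hdiag - hc + (q - 1) * hb, hb⟩, he, hc.symm⟩

theorem commutesUpToScalar_smul_commutantMatrix (q x y c : K) :
    CommutesUpToScalar (affineMatrix q) (c • commutantMatrix q x y) := by
  refine ⟨1, one_ne_zero, affineMatrix_mul_eq_smul_mul_iff.mpr ?_⟩
  simp only [commutantMatrix, Matrix.smul_apply, Matrix.of_apply, Matrix.cons_val',
    Matrix.cons_val_zero, Matrix.cons_val_fin_one, smul_eq_mul, Matrix.cons_val_one, mul_zero,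
    add_zero, one_mul, zero_mul, zero_add, and_self, and_true]
  constructor <;> ring

theorem mobiusMapsTo_smul_commutantMatrix {q x y c : K} (hc : c ≠ 0)
    (hx : (q - 1) * x + 1 ≠ 0) : MobiusMapsTo (c • commutantMatrix q x y) x y := by
  constructor
  · simpa [commutantMatrix] using mul_ne_zero hc hx
  · simp only [commutantMatrix, Matrix.smul_apply, Matrix.of_apply, Matrix.cons_val',
      Matrix.cons_val_zero, Matrix.cons_val_fin_one, smul_eq_mul, Matrix.cons_val_one, mul_zero,
      zero_mul, zero_add]
    ring

theorem commutesUpToScalar_and_mobiusMapsTo_iff {q x y : K} {A : Matrix (Fin 2) (Fin 2) K}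
    (hq : q ≠ -1) (hy : (q - 1) * y + 1 ≠ 0) (hx : (q - 1) * x + 1 ≠ 0) :
    CommutesUpToScalar (affineMatrix q) A ∧ MobiusMapsTo A x y ↔
      ∃ c : K, c ≠ 0 ∧ A = c • commutantMatrix q x y := by
  refine ⟨fun h => exists_eq_smul_commutantMatrix hq hy hx h.1 h.2, ?_⟩
  rintro ⟨c, hc, rfl⟩
  exact ⟨commutesUpToScalar_smul_commutantMatrix q x y c,
    mobiusMapsTo_smul_commutantMatrix hc hx⟩

end

section

open Polynomial

variable {F : Type*} [Field F]

theorem RatFunc.algebraMap_ne_zero_of_eval_zero_ne_zero {p : F[X]} (hp : p.eval 0 ≠ 0) :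
    algebraMap F[X] (RatFunc F) p ≠ 0 :=
  RatFunc.algebraMap_ne_zero fun h => hp (by simp [h])

theorem RatFunc.X_sq_ne_neg_one : (RatFunc.X : RatFunc F) ^ 2 ≠ -1 := by
  rw [Ne, ← add_eq_zero_iff_eq_neg]
  have : (RatFunc.X : RatFunc F) ^ 2 + 1 = algebraMap F[X] (RatFunc F) (Polynomial.X ^ 2 + 1) := by
    simp [RatFunc.algebraMap_X]
  exact this ▸ RatFunc.algebraMap_ne_zero_of_eval_zero_ne_zero (by simp)

theorem RatFunc.X_sq_sub_one_mul_C_mul_X_inv_add_one_ne_zero {s : F} (hs : s ≠ 0) :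
    ((RatFunc.X : RatFunc F) ^ 2 - 1) * (RatFunc.C s * RatFunc.X⁻¹) + 1 ≠ 0 := by
  have : ((RatFunc.X : RatFunc F) ^ 2 - 1) * (RatFunc.C s * RatFunc.X⁻¹) + 1 =
      algebraMap F[X] (RatFunc F) (Polynomial.C s * (Polynomial.X ^ 2 - 1) + Polynomial.X) /
        RatFunc.X := by
    have hX : (RatFunc.X : RatFunc F) ≠ 0 := RatFunc.X_ne_zero
    simp only [map_add, map_mul, map_sub, map_pow, map_one, RatFunc.algebraMap_X,
      RatFunc.algebraMap_C]
    field_simp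
  rw [this]
  exact div_ne_zero (RatFunc.algebraMap_ne_zero_of_eval_zero_ne_zero (by simpa using hs))
    RatFunc.X_ne_zero

end

theorem U2q_eq_commutantMatrix :
    U2q = commutantMatrix (tt ^ 2) (-(ci * tt⁻¹)) (ci * tt⁻¹) := by
  have htt : tt ≠ 0 := RatFunc.X_ne_zero
  ext i j
  fin_cases i <;> fin_cases j <;> simp [U2q, commutantMatrix] <;> field_simp <;> ring

theorem U2q_unique_general (A : Matrix (Fin 2) (Fin 2) (RatFunc ℂ)) :
    ((∃ lam : RatFunc ℂ, lam ≠ 0 ∧ Tq * A = lam • (A * Tq)) ∧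
        A 1 0 * (-(ci * tt⁻¹)) + A 1 1 ≠ 0 ∧
        A 0 0 * (-(ci * tt⁻¹)) + A 0 1 =
          (ci * tt⁻¹) * (A 1 0 * (-(ci * tt⁻¹)) + A 1 1)) ↔
      ∃ c : RatFunc ℂ, c ≠ 0 ∧ A = c • U2q := by
  have hy : (tt ^ 2 - 1) * (ci * tt⁻¹) + 1 ≠ 0 :=
    RatFunc.X_sq_sub_one_mul_C_mul_X_inv_add_one_ne_zero Complex.I_ne_zero
  have hx : (tt ^ 2 - 1) * (-(ci * tt⁻¹)) + 1 ≠ 0 := by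
    simpa [ci, tt, ← neg_mul] using
      RatFunc.X_sq_sub_one_mul_C_mul_X_inv_add_one_ne_zero (neg_ne_zero.mpr Complex.I_ne_zero)
  rw [U2q_eq_commutantMatrix]
  exact commutesUpToScalar_and_mobiusMapsTo_iff RatFunc.X_sq_ne_neg_one hy hx

/-- There is, up to a nonzero scalar, a unique matrix `A` over `ℂ(q^{1/2})` that commutes
with `T_q` up to a scalar and whose Möbius transformation sends `[-i]_q = -i q^{-1/2}` to
`[i]_q = i q^{-1/2}`: the matrix `(U²)_q`. -/
theorem U2q_unique (A : Matrix (Fin 2) (Fin 2) (RatFunc ℂ)) (hA : A ≠ 0) :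
    ((∃ lam : RatFunc ℂ, lam ≠ 0 ∧ Tq * A = lam • (A * Tq)) ∧
        A 1 0 * (-(ci * tt⁻¹)) + A 1 1 ≠ 0 ∧
        A 0 0 * (-(ci * tt⁻¹)) + A 0 1 =
          (ci * tt⁻¹) * (A 1 0 * (-(ci * tt⁻¹)) + A 1 1)) ↔
      ∃ c : RatFunc ℂ, c ≠ 0 ∧ A = c • U2q :=
  U2q_unique_general A

end
end

section
/- Define the operator U_q on functions of q by U_q(X)(q) = (X(q^{-1}) + i q^{1/2}) / ((1-q)·X(q^{-1}) + q). Then U_q commutes with the operator T_q(X)(q) = q·X(q) + 1, i.e. U_q(T_q X) = T_q(U_q X) as functions of q. -/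
/-! `σ` conjugates `T_q : X ↦ t²X + 1` into `Y ↦ t⁻²Y + 1`, so it suffices that the Möbius map
`Y ↦ (Y + c)/((1 - s)Y + s)` carries `Y ↦ s⁻¹Y + 1` to `Y ↦ sY + 1`. This holds because the
substitution `Y ↦ s⁻¹Y + 1` rescales the denominator by exactly `s⁻¹`. -/

theorem mobius_comp_inv_affine {K : Type*} [Field K] {s : K} (hs : s ≠ 0) (c Y : K)
    (hD : (1 - s) * Y + s ≠ 0) :
    (s⁻¹ * Y + 1 + c) / ((1 - s) * (s⁻¹ * Y + 1) + s) = s * ((Y + c) / ((1 - s) * Y + s)) + 1 := by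
  have hden : (1 - s) * (s⁻¹ * Y + 1) + s = s⁻¹ * ((1 - s) * Y + s) := by
    field_simp
    ring
  rw [hden, mul_div_assoc', div_add_one hD, div_eq_div_iff (mul_ne_zero (inv_ne_zero hs) hD) hD]
  field_simp
  ring

theorem Uq_commutes_with_Tq_general (K : Type*) [Field K] (σ : K ≃+* K) (i t : K)
    (ht : t ≠ 0) (hσt : σ t = t⁻¹)
    (X : K) (hD : (1 - t ^ 2) * σ X + t ^ 2 ≠ 0) :
    (σ (t ^ 2 * X + 1) + i * t) / ((1 - t ^ 2) * σ (t ^ 2 * X + 1) + t ^ 2) =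
      t ^ 2 * ((σ X + i * t) / ((1 - t ^ 2) * σ X + t ^ 2)) + 1 := by
  rw [map_add, map_mul, map_pow, hσt, map_one, inv_pow]
  exact mobius_comp_inv_affine (pow_ne_zero 2 ht) (i * t) (σ X) hD

/-- In a field `K` of "functions of q" with an involution `σ` realizing `q ↦ q⁻¹`
(where `t = q^{1/2}`, `σ t = t⁻¹`, `i` the imaginary unit is fixed), the operator
`U_q(X) = (σX + i t)/((1 - t²) σX + t²)` commutes with `T_q(X) = t² X + 1`. -/
theorem Uq_commutes_with_Tq (K : Type*) [Field K] (σ : K ≃+* K) (i t : K)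
    (ht : t ≠ 0) (hi : i ^ 2 = -1) (hσt : σ t = t⁻¹) (hσi : σ i = i)
    (hσσ : ∀ x : K, σ (σ x) = x)
    (X : K) (hD : (1 - t ^ 2) * σ X + t ^ 2 ≠ 0) :
    (σ (t ^ 2 * X + 1) + i * t) / ((1 - t ^ 2) * σ (t ^ 2 * X + 1) + t ^ 2) =
      t ^ 2 * ((σ X + i * t) / ((1 - t ^ 2) * σ X + t ^ 2)) + 1 :=
  Uq_commutes_with_Tq_general K σ i t ht hσt X hD
end

section
/- Define a sequence (a_n)_{n ∈ ℤ} in ℂ(q^{1/2}) by a_0 = 0, a_1 = i q^{-1/2}, a_{-1} = -i q^{-1/2}, a_2 = (Q+1)·i q^{-1/2}, and the recurrence a_{n+2} = (Q+1)·a_n - Q·a_{n-2}, where Q = (2i q^{1/2}(q-1) - (q²-3q+1))/(q²-q+1). Then for all n ∈ ℤ: a_{2n} = [2]_Q [n]_Q · i q^{-1/2} and a_{2n-1} = ([2]_Q [n]_Q - Q^n) · i q^{-1/2}, where [n]_Q = (1-Q^n)/(1-Q). -/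
/-!
The recurrence only links indices of the same parity, so `m ↦ a (2m)` and `m ↦ a (2m - 1)` each
satisfy `x (m + 2) = (Q + 1) x (m + 1) - Q x m`, whose characteristic roots are `1` and `Q`.
Hence `α [m]_Q + β Qᵐ` solves it, and as `Q ≠ 0` a solution on `ℤ` is determined by two
consecutive values; matching `α, β` with the initial values gives the formulas. That `Q ≠ 0, 1`
comes from transcendence of `t`: either equation has the form `p(t) + i r(t) = 0` with
`p, r ∈ ℚ[X]`, so `t` is a root of `p² + r²`, which is nonzero as `p(0) ≠ 0`.
-/

open Polynomial

theorem eq_of_linear_recurrence {R : Type*} [CommRing R] [NoZeroDivisors R] {A B : R}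
    (hB : B ≠ 0) {f g : ℤ → R} (hf : ∀ n, f (n + 2) = A * f (n + 1) + B * f n)
    (hg : ∀ n, g (n + 2) = A * g (n + 1) + B * g n) (h0 : f 0 = g 0) (h1 : f 1 = g 1) :
    f = g := by
  suffices h : ∀ n, f n = g n ∧ f (n + 1) = g (n + 1) from funext fun n => (h n).1
  intro n
  induction n with
  | zero => exact ⟨h0, by simpa using h1⟩
  | succ n ih =>
    refine ⟨ih.2, ?_⟩
    rw [add_assoc, one_add_one_eq_two, hf, hg, ih.1, ih.2]
  | pred n ih =>
    refine ⟨?_, by simpa using ih.1⟩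
    have hf' := hf (-n - 1)
    have hg' := hg (-n - 1)
    rw [show -(n : ℤ) - 1 + 2 = -n + 1 by ring, sub_add_cancel] at hf' hg'
    exact mul_left_cancel₀ hB (by linear_combination hg' - hf' + ih.2 - A * ih.1)

section qInt

variable {K : Type*} [Field K]

noncomputable def qInt (Q : K) (n : ℤ) : K := (1 - Q ^ n) / (1 - Q)

@[simp]
theorem qInt_zero (Q : K) : qInt Q 0 = 0 := by
  simp [qInt]

theorem qInt_one {Q : K} (hQ : Q ≠ 1) : qInt Q 1 = 1 := by
  rw [qInt, zpow_one, div_self (sub_ne_zero.mpr hQ.symm)]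

theorem qInt_two {Q : K} (hQ : Q ≠ 1) : qInt Q 2 = 1 + Q := by
  rw [qInt, zpow_two, div_eq_iff (sub_ne_zero.mpr hQ.symm)]
  ring

theorem qInt_add_two {Q : K} (hQ : Q ≠ 0) (n : ℤ) :
    qInt Q (n + 2) = (Q + 1) * qInt Q (n + 1) - Q * qInt Q n := by
  simp only [qInt, zpow_add₀ hQ, zpow_one, zpow_two]
  ring

theorem linear_combination_qInt_zpow_add_two {Q : K} (hQ : Q ≠ 0) (α β : K) (n : ℤ) :
    α * qInt Q (n + 2) + β * Q ^ (n + 2) =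
      (Q + 1) * (α * qInt Q (n + 1) + β * Q ^ (n + 1)) + -Q * (α * qInt Q n + β * Q ^ n) := by
  rw [qInt_add_two hQ, zpow_add₀ hQ, zpow_add₀ hQ, zpow_one, zpow_two]
  ring

theorem eq_qInt_of_step_two_recurrence {Q : K} (hQ0 : Q ≠ 0) (hQ1 : Q ≠ 1) {a : ℤ → K}
    (harec : ∀ n, a (n + 2) = (Q + 1) * a n - Q * a (n - 2)) {r : ℤ} {α β : K} (h0 : a r = β)
    (h2 : a (r + 2) = α + β * Q) (m : ℤ) : a (2 * m + r) = α * qInt Q m + β * Q ^ m := by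
  have hsub : ∀ k : ℤ,
      a (2 * (k + 2) + r) = (Q + 1) * a (2 * (k + 1) + r) + -Q * a (2 * k + r) := by
    intro k
    rw [show 2 * (k + 2) + r = 2 * (k + 1) + r + 2 by ring, harec,
      show 2 * (k + 1) + r - 2 = 2 * k + r by ring]
    ring
  have hsol := eq_of_linear_recurrence (neg_ne_zero.mpr hQ0) (f := fun m => a (2 * m + r))
    (g := fun m => α * qInt Q m + β * Q ^ m) hsub (linear_combination_qInt_zpow_add_two hQ0 α β)
    (by simpa using h0) (by simpa [qInt_one hQ1, add_comm r] using h2)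
  exact congrFun hsol m

end qInt

theorem Transcendental.aeval_add_I_mul_aeval_ne_zero {t : ℂ} (ht : Transcendental ℚ t)
    {p r : ℚ[X]} (hp : p.eval 0 ≠ 0) :
    Polynomial.aeval t p + Complex.I * Polynomial.aeval t r ≠ 0 := by
  intro h
  have hsq : Polynomial.aeval t (p ^ 2 + r ^ 2) = 0 := by
    simp only [map_add, map_pow]
    linear_combination (Polynomial.aeval t p - Complex.I * Polynomial.aeval t r) * h +
      Polynomial.aeval t r ^ 2 * Complex.I_sq
  have h0 := congrArg (eval 0) (transcendental_iff.mp ht _ hsq)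
  simp only [eval_add, eval_pow, eval_zero] at h0
  exact hp (by nlinarith [sq_nonneg (r.eval 0), sq_nonneg (p.eval 0)])

theorem ne_zero_and_ne_one_of_transcendental {t Q : ℂ} (ht : Transcendental ℚ t)
    (hQ : Q = (2 * Complex.I * t * (t ^ 2 - 1) - ((t ^ 2) ^ 2 - 3 * t ^ 2 + 1)) /
      ((t ^ 2) ^ 2 - t ^ 2 + 1)) : Q ≠ 0 ∧ Q ≠ 1 := by
  have hD : (t ^ 2) ^ 2 - t ^ 2 + 1 ≠ 0 := by
    convert ht.aeval_add_I_mul_aeval_ne_zero (p := X ^ 4 - X ^ 2 + 1) (r := 0) (by simp) using 1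
    simp only [map_add, map_sub, map_pow, map_one, map_zero, aeval_X]
    ring
  have hN : 2 * Complex.I * t * (t ^ 2 - 1) - ((t ^ 2) ^ 2 - 3 * t ^ 2 + 1) ≠ 0 := by
    convert ht.aeval_add_I_mul_aeval_ne_zero (p := -(X ^ 4 - 3 * X ^ 2 + 1))
      (r := 2 * X * (X ^ 2 - 1)) (by simp) using 1
    simp only [map_add, map_sub, map_neg, map_mul, map_pow, map_ofNat, map_one, aeval_X]
    ring
  have hND : 2 * Complex.I * t * (t ^ 2 - 1) - ((t ^ 2) ^ 2 - 3 * t ^ 2 + 1) ≠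
      (t ^ 2) ^ 2 - t ^ 2 + 1 := by
    rw [← sub_ne_zero]
    convert ht.aeval_add_I_mul_aeval_ne_zero (p := -(2 * X ^ 4 - 4 * X ^ 2 + 2))
      (r := 2 * X * (X ^ 2 - 1)) (by norm_num) using 1
    simp only [map_add, map_sub, map_neg, map_mul, map_pow, map_ofNat, map_one, aeval_X]
    ring
  rw [hQ]
  exact ⟨div_ne_zero hN hD, by rwa [Ne, div_eq_one_iff_eq hD]⟩

/-- Closed formula for q-deformed Gaussian integers: with `t = q^{1/2}` transcendental,
`Q = (2 i q^{1/2}(q-1) - (q²-3q+1))/(q²-q+1)`, and `a : ℤ → ℂ`, `a n = [n i]_q`,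
defined by `a 0 = 0`, `a (±1) = ± i q^{-1/2}`, `a 2 = (Q+1) i q^{-1/2}` and the
recurrence `a (n+2) = (Q+1) a n - Q a (n-2)`, one has, for every `n : ℤ`,
`[2n i]_q = [2]_Q [n]_Q [i]_q` and `[(2n-1) i]_q = ([2]_Q [n]_Q - Qⁿ) [i]_q`,
where `[m]_Q = (1 - Q^m)/(1 - Q)` and `[i]_q = i q^{-1/2}`. -/
theorem qGaussian_closed_form (t : ℂ) (htr : Transcendental ℚ t) (Q : ℂ)
    (hQ : Q = (2 * Complex.I * t * (t ^ 2 - 1) - ((t ^ 2) ^ 2 - 3 * t ^ 2 + 1)) /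
      ((t ^ 2) ^ 2 - t ^ 2 + 1))
    (a : ℤ → ℂ) (ha0 : a 0 = 0) (ha1 : a 1 = Complex.I * t⁻¹)
    (ham1 : a (-1) = -(Complex.I * t⁻¹))
    (ha2 : a 2 = (Q + 1) * (Complex.I * t⁻¹))
    (harec : ∀ n : ℤ, a (n + 2) = (Q + 1) * a n - Q * a (n - 2)) :
    ∀ n : ℤ,
      a (2 * n) =
        ((1 - Q ^ (2 : ℤ)) / (1 - Q)) * ((1 - Q ^ n) / (1 - Q)) * (Complex.I * t⁻¹) ∧
      a (2 * n - 1) =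
        (((1 - Q ^ (2 : ℤ)) / (1 - Q)) * ((1 - Q ^ n) / (1 - Q)) - Q ^ n) *
          (Complex.I * t⁻¹) := by
  obtain ⟨hQ0, hQ1⟩ := ne_zero_and_ne_one_of_transcendental htr hQ
  intro n
  have heven := eq_qInt_of_step_two_recurrence hQ0 hQ1 harec (r := 0)
    (α := (Q + 1) * (Complex.I * t⁻¹)) (β := 0) ha0 (by simpa using ha2) n
  have hodd := eq_qInt_of_step_two_recurrence hQ0 hQ1 harec (r := -1)
    (α := (Q + 1) * (Complex.I * t⁻¹)) (β := -(Complex.I * t⁻¹)) ham1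
    (by rw [show (-1 : ℤ) + 2 = 1 by norm_num, ha1]; ring) n
  rw [add_zero] at heven
  rw [← sub_eq_add_neg] at hodd
  change a (2 * n) = qInt Q 2 * qInt Q n * _ ∧ a (2 * n - 1) = (qInt Q 2 * qInt Q n - Q ^ n) * _
  rw [heven, hodd, qInt_two hQ1]
  constructor <;> ring
end

section
/- Define modified Chebyshev polynomials Ũ^I_n(x) by Ũ^I_0 = 1, Ũ^I_1 = 2x and Ũ^I_{n+1} = 2x·Ũ^I_n − Ũ^I_{n−1} for n odd, Ũ^I_{n+1} = 2·Ũ^I_n − Ũ^I_{n−1} for n even. Define ℐ_n(z) := Im([ni]_q)·(i q^{-1/2})^{-1} where z = q/(q²−q+1) and [ni]_q is given by the closed formulas [2ni]_q = [2]_Q[n]_Q [i]_q, [(2n−1)i]_q = ([2]_Q[n]_Q − Q^n)[i]_q. Then ℐ_{n+1}(z) = Ũ^I_n(z) for all n ≥ 0. -/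
/-!
The number `Q` lies on the unit circle, with `Re Q = 2z - 1`; hence `Q⁻¹ = conj Q` and
`(Q + Q⁻¹ + 2) / 2 = 2z` is real. From `[n + 1]_Q = [n]_Q + Qⁿ` the closed formulas give,
as identities of complex numbers,
`[(2m+1) i]_q = 2 [2m i]_q - [(2m-1) i]_q` and
`[(2m+2) i]_q + [2m i]_q - 2z [(2m+1) i]_q = (Q - Q⁻¹)/2 · [i]_q = i Im Q · i q^{-1/2}`.
The last right-hand side is real, so `ℐ` obeys the two recurrences of `Ũ^I`, and it starts
with `ℐ_0 = 0`, `ℐ_1 = 1`.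
-/

open Complex ComplexConjugate

noncomputable def qNumber (Q : ℂ) (n : ℤ) : ℂ := (1 - Q ^ n) / (1 - Q)

section qNumber

variable {Q : ℂ}

@[simp] lemma qNumber_zero : qNumber Q 0 = 0 := by simp [qNumber]

lemma qNumber_one (hQ1 : Q ≠ 1) : qNumber Q 1 = 1 := by
  rw [qNumber, zpow_one, div_self (sub_ne_zero.2 hQ1.symm)]

lemma qNumber_two (hQ1 : Q ≠ 1) : qNumber Q 2 = 1 + Q := by
  rw [qNumber, div_eq_iff (sub_ne_zero.2 hQ1.symm), zpow_two]
  ring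

lemma qNumber_add_one (hQ0 : Q ≠ 0) (hQ1 : Q ≠ 1) (n : ℤ) :
    qNumber Q (n + 1) = qNumber Q n + Q ^ n := by
  have h1Q : 1 - Q ≠ 0 := sub_ne_zero.2 hQ1.symm
  rw [qNumber, qNumber, zpow_add_one₀ hQ0]
  field_simp
  ring

end qNumber

/-- `a n` plays the role of `[n i]_q`, and `c` that of `[i]_q`. -/
structure IsQGaussian (Q c : ℂ) (a : ℤ → ℂ) : Prop where
  even : ∀ n : ℤ, a (2 * n) = qNumber Q 2 * qNumber Q n * c
  odd : ∀ n : ℤ, a (2 * n - 1) = (qNumber Q 2 * qNumber Q n - Q ^ n) * c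

namespace IsQGaussian

variable {Q c : ℂ} {a : ℤ → ℂ}

lemma apply_zero (ha : IsQGaussian Q c a) : a 0 = 0 := by
  simpa using ha.even 0

lemma apply_one (ha : IsQGaussian Q c a) (hQ1 : Q ≠ 1) : a 1 = c := by
  simpa [qNumber_one hQ1, qNumber_two hQ1] using ha.odd 1

lemma odd_step (ha : IsQGaussian Q c a) (hQ0 : Q ≠ 0) (hQ1 : Q ≠ 1) (m : ℤ) :
    a (2 * m + 1) = 2 * a (2 * m) - a (2 * m - 1) := by
  rw [show 2 * m + 1 = 2 * (m + 1) - 1 by ring, ha.odd, ha.even, ha.odd,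
    qNumber_add_one hQ0 hQ1, zpow_add_one₀ hQ0, qNumber_two hQ1]
  ring

lemma even_step (ha : IsQGaussian Q c a) (hQ0 : Q ≠ 0) (hQ1 : Q ≠ 1) (m : ℤ) :
    a (2 * m + 2) + a (2 * m) - (Q + Q⁻¹ + 2) / 2 * a (2 * m + 1) = (Q - Q⁻¹) / 2 * c := by
  rw [show 2 * m + 2 = 2 * (m + 1) by ring, show 2 * m + 1 = 2 * (m + 1) - 1 by ring,
    ha.even, ha.even, ha.odd, qNumber_add_one hQ0 hQ1, zpow_add_one₀ hQ0, qNumber_two hQ1]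
  have h1Q : 1 - Q ≠ 0 := sub_ne_zero.2 hQ1.symm
  simp only [qNumber]
  field_simp
  ring

lemma im_odd_step (ha : IsQGaussian Q c a) (hQ0 : Q ≠ 0) (hQ1 : Q ≠ 1) (m : ℤ) :
    (a (2 * m + 1)).im = 2 * (a (2 * m)).im - (a (2 * m - 1)).im := by
  simp [ha.odd_step hQ0 hQ1 m]

lemma im_even_step (ha : IsQGaussian Q c a) (hQ : normSq Q = 1) (hQ1 : Q ≠ 1)
    (hc : c.re = 0) (m : ℤ) :
    (a (2 * m + 2)).im = (Q.re + 1) * (a (2 * m + 1)).im - (a (2 * m)).im := by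
  have hQ0 : Q ≠ 0 := by rintro rfl; simp at hQ
  have hinv : Q⁻¹ = conj Q := by rw [inv_def, hQ]; simp
  have hre : (Q + Q⁻¹ + 2) / 2 = ((Q.re + 1 : ℝ) : ℂ) := by
    rw [hinv, add_conj]; push_cast; ring
  have him : ((Q - Q⁻¹) / 2 * c).im = 0 := by
    rw [hinv, sub_conj]; simp [hc]
  have h := congrArg im (ha.even_step hQ0 hQ1 m)
  rw [hre, him, sub_im, add_im, im_ofReal_mul] at h
  linarith

end IsQGaussian

theorem eq_chebyshevI_of_recurrence (U : ℕ → ℝ → ℝ)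
    (hU0 : ∀ x, U 0 x = 1) (hU1 : ∀ x, U 1 x = 2 * x)
    (hUeven : ∀ n : ℕ, 1 ≤ n → Even n → ∀ x, U (n + 1) x = 2 * x * U n x - U (n - 1) x)
    (hUodd : ∀ n : ℕ, 1 ≤ n → Odd n → ∀ x, U (n + 1) x = 2 * U n x - U (n - 1) x)
    {x : ℝ} {b : ℤ → ℝ} (hb0 : b 0 = 0) (hb1 : b 1 = 1)
    (hb_odd : ∀ m : ℤ, b (2 * m + 1) = 2 * b (2 * m) - b (2 * m - 1))
    (hb_even : ∀ m : ℤ, b (2 * m + 2) = 2 * x * b (2 * m + 1) - b (2 * m)) :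
    ∀ n : ℕ, b (n + 1) = U n x := by
  intro n
  induction n using Nat.twoStepInduction with
  | zero => simpa [hU0] using hb1
  | one => simpa [hU1, hb0, hb1] using hb_even 0
  | more n ih₀ ih₁ =>
    obtain ⟨k, rfl | rfl⟩ := n.even_or_odd'
    · rw [hUodd (2 * k + 1) (by omega) (odd_two_mul_add_one k), Nat.add_sub_cancel, ← ih₀, ← ih₁]
      have h := hb_odd (k + 1)
      push_cast at h ⊢
      ring_nf at h ⊢
      exact h
    · rw [hUeven (2 * k + 1 + 1) (by omega) ⟨k + 1, by ring⟩, Nat.add_sub_cancel, ← ih₀, ← ih₁]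
      have h := hb_even (k + 1)
      push_cast at h ⊢
      ring_nf at h ⊢
      exact h

noncomputable def qGaussianQ (q : ℝ) : ℂ :=
  (2 * I * (Real.sqrt q : ℂ) * ((q : ℂ) - 1) - ((q : ℂ) ^ 2 - 3 * (q : ℂ) + 1)) /
    ((q : ℂ) ^ 2 - (q : ℂ) + 1)

section qGaussianQ

variable (q : ℝ)

lemma mul_sub_one_add_one_ne_zero : q * (q - 1) + 1 ≠ 0 := by
  nlinarith [sq_nonneg (2 * q - 1)]

lemma qGaussianQ_eq :
    qGaussianQ q = ⟨2 * (q / (q ^ 2 - q + 1)) - 1, 2 * √q * (q - 1) / (q ^ 2 - q + 1)⟩ := by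
  have hD : (q : ℂ) * ((q : ℂ) - 1) + 1 ≠ 0 := mod_cast mul_sub_one_add_one_ne_zero q
  rw [mk_eq_add_mul_I, qGaussianQ]
  push_cast
  field_simp
  ring

lemma re_qGaussianQ : (qGaussianQ q).re = 2 * (q / (q ^ 2 - q + 1)) - 1 := by
  rw [qGaussianQ_eq]

lemma im_qGaussianQ : (qGaussianQ q).im = 2 * √q * (q - 1) / (q ^ 2 - q + 1) := by
  rw [qGaussianQ_eq]

variable {q}

lemma normSq_qGaussianQ (hq : 0 ≤ q) : normSq (qGaussianQ q) = 1 := by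
  have hD := mul_sub_one_add_one_ne_zero q
  rw [normSq_apply, re_qGaussianQ, im_qGaussianQ]
  field_simp
  linear_combination 4 * (q - 1) ^ 2 * Real.sq_sqrt hq

lemma qGaussianQ_ne_one (hq0 : 0 < q) (hq1 : q ≠ 1) : qGaussianQ q ≠ 1 := by
  intro h
  have him : 2 * √q * (q - 1) / (q ^ 2 - q + 1) = 0 := by rw [← im_qGaussianQ, h, one_im]
  rcases div_eq_zero_iff.1 him with hnum | hD
  · simp [(Real.sqrt_pos.2 hq0).ne', sub_ne_zero.2 hq1] at hnum
  · exact mul_sub_one_add_one_ne_zero q (by linear_combination hD)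

end qGaussianQ

/-- The imaginary parts of the q-deformed Gaussian integers are the modified Chebyshev
polynomials `Ũ^I_n`: with `q ∈ (0,1)`, `z = q/(q²-q+1)`,
`ℐ_n := Im([n i]_q) · √q` and `[n i]_q` given by the closed formulas
`[2n i]_q = [2]_Q [n]_Q [i]_q`, `[(2n-1) i]_q = ([2]_Q [n]_Q - Qⁿ)[i]_q`, and `Ũ^I`
defined by `Ũ^I_0 = 1`, `Ũ^I_1 = 2x`, `Ũ^I_{n+1} = 2x Ũ^I_n - Ũ^I_{n-1}` when the
factor `2x` occurs at even `n` and `Ũ^I_{n+1} = 2 Ũ^I_n - Ũ^I_{n-1}` at odd `n`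
(so that `Ũ^I_2 = 4x - 1`, `Ũ^I_3 = 8x² - 4x`, …), one has `ℐ_{n+1}(z) = Ũ^I_n(z)`
for all `n ≥ 0`. -/
theorem im_qGaussian_eq_chebyshev (q : ℝ) (hq0 : 0 < q) (hq1 : q < 1) (Q : ℂ)
    (hQ : Q = (2 * Complex.I * (Real.sqrt q : ℂ) * ((q : ℂ) - 1) -
        ((q : ℂ) ^ 2 - 3 * (q : ℂ) + 1)) / ((q : ℂ) ^ 2 - (q : ℂ) + 1))
    (a : ℤ → ℂ)
    (haeven : ∀ n : ℤ, a (2 * n) =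
      ((1 - Q ^ (2 : ℤ)) / (1 - Q)) * ((1 - Q ^ n) / (1 - Q)) *
        (Complex.I * ((Real.sqrt q : ℂ))⁻¹))
    (haodd : ∀ n : ℤ, a (2 * n - 1) =
      (((1 - Q ^ (2 : ℤ)) / (1 - Q)) * ((1 - Q ^ n) / (1 - Q)) - Q ^ n) *
        (Complex.I * ((Real.sqrt q : ℂ))⁻¹))
    (U : ℕ → ℝ → ℝ)
    (hU0 : ∀ x, U 0 x = 1) (hU1 : ∀ x, U 1 x = 2 * x)
    (hUeven : ∀ n : ℕ, 1 ≤ n → Even n → ∀ x, U (n + 1) x = 2 * x * U n x - U (n - 1) x)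
    (hUodd : ∀ n : ℕ, 1 ≤ n → Odd n → ∀ x, U (n + 1) x = 2 * U n x - U (n - 1) x) :
    ∀ n : ℕ, (a ((n : ℤ) + 1)).im * Real.sqrt q = U n (q / (q ^ 2 - q + 1)) := by
  have ha : IsQGaussian Q (I * (√q : ℂ)⁻¹) a := ⟨haeven, haodd⟩
  obtain rfl : Q = qGaussianQ q := hQ
  have hQ : normSq (qGaussianQ q) = 1 := normSq_qGaussianQ hq0.le
  have hQ1 : qGaussianQ q ≠ 1 := qGaussianQ_ne_one hq0 hq1.ne
  have hQ0 : qGaussianQ q ≠ 0 := by rintro h; simp [h] at hQ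
  refine eq_chebyshevI_of_recurrence U hU0 hU1 hUeven hUodd (b := fun k ↦ (a k).im * √q)
    ?_ ?_ (fun m ↦ ?_) (fun m ↦ ?_)
  · simp [ha.apply_zero]
  · simp [ha.apply_one hQ1, (Real.sqrt_pos.2 hq0).ne']
  · simp only [ha.im_odd_step hQ0 hQ1 m]
    ring
  · simp only [ha.im_even_step hQ hQ1 (by simp) m, re_qGaussianQ]
    ring
end

section
/- With ℐ_n(z) = Im([ni]_q)/(q^{-1/2}) and z = q/(q²−q+1), the sequence ℐ_n satisfies the mixed recurrence ℐ_{n+1} = 2z·ℐ_n − ℐ_{n−1} for n odd and ℐ_{n+1} = 2·ℐ_n − ℐ_{n−1} for n even, with ℐ_0 = 0, ℐ_1 = 1. -/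
/-!
Constant sequences solve `a (n + 2) = (Q + 1) a n - Q a (n - 2)` (its characteristic roots are
`1` and `Q`), and for `D = 1 / (q - 1)` the initial values kill the constant component:
`b = a + D` satisfies `b (n + 2) = Q b n`. For a 2-periodic `c`, the defect
`b (n + 1) + b (n - 1) - c n b n` obeys the same relation, so it vanishes identically once it
vanishes at `n = 0, 1`; for `c` alternating between `2` (even `n`) and `2z` (odd `n`) this is an
identity in `q`. Since `D` and `c` are real, taking imaginary parts gives the mixed recurrence.
-/

open Complex

theorem eq_zero_of_forall_add_two_eq_mul {M₀ : Type*} [MulZeroClass M₀] {r : ℤ → M₀} {c : M₀}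
    (hc : IsLeftRegular c) (hr : ∀ n, r (n + 2) = c * r n) {m : ℤ} (h₀ : r m = 0)
    (h₁ : r (m + 1) = 0) (n : ℤ) : r n = 0 := by
  suffices h : ∀ k : ℤ, r (m + k) = 0 ∧ r (m + k + 1) = 0 by
    simpa using (h (n - m)).1
  intro k
  induction k using Int.induction_on with
  | zero => simpa using ⟨h₀, h₁⟩
  | succ i ih =>
    refine ⟨by simpa [add_assoc] using ih.2, ?_⟩
    rw [show m + (i + 1) + 1 = m + i + 2 by ring, hr, ih.1, mul_zero]
  | pred i ih =>
    refine ⟨?_, by rw [show m + (-i - 1) + 1 = m + -i by ring]; exact ih.1⟩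
    have h := hr (m + (-i - 1))
    rw [show m + (-i - 1) + 2 = m + -i + 1 by ring, ih.2, eq_comm,
      hc.mul_left_eq_zero_iff] at h
    exact h

section Recurrence

variable {R : Type*} [CommRing R]

theorem add_two_add_eq_mul_of_recurrence {a : ℤ → R} {Q : R} (D : R)
    (ha : ∀ n, a (n + 2) = (Q + 1) * a n - Q * a (n - 2))
    (h₀ : a 1 + D = Q * (a (-1) + D)) (h₁ : a 2 + D = Q * (a 0 + D)) (n : ℤ) :
    a (n + 2) + D = Q * (a n + D) := by
  let d n := a (n + 2) + D - Q * (a n + D)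
  have hd : ∀ n, d (n + 2) = 1 * d n := fun n => by
    have h := ha (n + 2)
    rw [add_sub_cancel_right] at h
    simp only [d]
    linear_combination h
  have hd₀ : d (-1) = 0 := by
    simp only [d, show (-1 : ℤ) + 2 = 1 by norm_num]
    linear_combination h₀
  have hd₁ : d 0 = 0 := by
    simp only [d, zero_add]
    linear_combination h₁
  exact sub_eq_zero.1 (eq_zero_of_forall_add_two_eq_mul isRegular_one.left hd hd₀ hd₁ n)

theorem add_one_add_sub_one_eq_mul_of_add_two_eq_mul {b c : ℤ → R} {Q : R} (hQ : IsLeftRegular Q)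
    (hb : ∀ n, b (n + 2) = Q * b n) (hc : Function.Periodic c 2)
    (h₀ : b 1 + b (-1) = c 0 * b 0) (h₁ : b 2 + b 0 = c 1 * b 1) (n : ℤ) :
    b (n + 1) + b (n - 1) = c n * b n := by
  let r n := b (n + 1) + b (n - 1) - c n * b n
  have hr : ∀ n, r (n + 2) = Q * r n := fun n => by
    have h₁ := hb (n + 1)
    have h₂ := hb (n - 1)
    simp only [r, hc n, show n + 2 + 1 = n + 1 + 2 by ring, show n + 2 - 1 = n - 1 + 2 by ring,
      hb n, h₁, h₂]
    ring
  have hr₀ : r 0 = 0 := by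
    simp only [r, zero_add, zero_sub]
    linear_combination h₀
  have hr₁ : r 1 = 0 := by
    simp only [r, show (1 : ℤ) + 1 = 2 by norm_num, sub_self]
    linear_combination h₁
  exact sub_eq_zero.1 (eq_zero_of_forall_add_two_eq_mul hQ hr hr₀ hr₁ n)

end Recurrence

noncomputable def qRatio (q : ℝ) : ℂ :=
  (2 * I * √q * (q - 1) - (q ^ 2 - 3 * q + 1)) / (q ^ 2 - q + 1)

section qRatio

variable {q : ℝ}

theorem sq_sub_add_one_ne_zero (q : ℝ) : (q : ℂ) ^ 2 - q + 1 ≠ 0 := by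
  have h : (0 : ℝ) < q ^ 2 - q + 1 := by nlinarith [sq_nonneg (q - 1 / 2)]
  exact_mod_cast h.ne'

theorem qRatio_add_one_mul_I (hq : 0 ≤ q) :
    (qRatio q + 1) * (I * (q - 1)) = (qRatio q - 1) * √q := by
  have hs : ((√q : ℝ) : ℂ) ^ 2 = q := by exact_mod_cast Real.sq_sqrt hq
  have := sq_sub_add_one_ne_zero q
  unfold qRatio
  rw [div_add_one this, div_sub_one this, div_mul_eq_mul_div, div_mul_eq_mul_div,
    div_left_inj' this]
  linear_combination 2 * I * (1 - q) * hs + 2 * √q * (1 - q) ^ 2 * I_sq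

theorem qRatio_add_one_mul_sqrt (hq : 0 ≤ q) :
    (qRatio q + 1) * √q = ((2 * (q / (q ^ 2 - q + 1)) : ℝ) : ℂ) * (√q + I * (q - 1)) := by
  have hs : ((√q : ℝ) : ℂ) ^ 2 = q := by exact_mod_cast Real.sq_sqrt hq
  have := sq_sub_add_one_ne_zero q
  unfold qRatio
  have hz : ((2 * (q / (q ^ 2 - q + 1)) : ℝ) : ℂ) * (q ^ 2 - q + 1) = 2 * q := by
    push_cast
    rw [mul_assoc, div_mul_cancel₀ _ this]
  rw [div_add_one this, div_mul_eq_mul_div, div_eq_iff this]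
  linear_combination (-(√q + I * (q - 1) : ℂ)) * hz + 2 * I * (q - 1) * hs

theorem qRatio_ne_zero (hq : 0 < q) : qRatio q ≠ 0 := by
  intro h
  exact (Real.sqrt_pos.2 hq).ne' (by simpa [h] using congrArg re (qRatio_add_one_mul_I hq.le))

theorem qRatio_add_one_mul_I_div_sqrt (hq : 0 < q) (hq1 : q ≠ 1) :
    (qRatio q + 1) * (I * (√q : ℂ)⁻¹) = (qRatio q - 1) * ((q - 1)⁻¹ : ℝ) := by
  have hs : (√q : ℂ) ≠ 0 := by exact_mod_cast (Real.sqrt_pos.2 hq).ne'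
  have hq1' : (q : ℂ) - 1 ≠ 0 := sub_ne_zero.2 (by exact_mod_cast hq1)
  push_cast
  field_simp
  linear_combination qRatio_add_one_mul_I hq.le

theorem qRatio_add_one_mul_inv_sub_one (hq : 0 < q) (hq1 : q ≠ 1) :
    (qRatio q + 1) * ((q - 1)⁻¹ : ℝ) =
      ((2 * (q / (q ^ 2 - q + 1)) : ℝ) : ℂ) * (I * (√q : ℂ)⁻¹ + ((q - 1)⁻¹ : ℝ)) := by
  have hs : (√q : ℂ) ≠ 0 := by exact_mod_cast (Real.sqrt_pos.2 hq).ne'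
  have hq1' : (q : ℂ) - 1 ≠ 0 := sub_ne_zero.2 (by exact_mod_cast hq1)
  set z : ℂ := ((2 * (q / (q ^ 2 - q + 1)) : ℝ) : ℂ)
  push_cast
  field_simp
  linear_combination qRatio_add_one_mul_sqrt hq.le

end qRatio

/-- With `ℐ_n = Im([n i]_q) · √q` and `z = q/(q²-q+1)` for `q ∈ (0,1)`, the sequence
`ℐ_n` satisfies the mixed recurrence `ℐ_{n+1} = 2z ℐ_n - ℐ_{n-1}` for `n` odd and
`ℐ_{n+1} = 2 ℐ_n - ℐ_{n-1}` for `n` even, with `ℐ_0 = 0`, `ℐ_1 = 1`. -/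
theorem im_qGaussian_recurrence (q : ℝ) (hq0 : 0 < q) (hq1 : q < 1) (Q : ℂ)
    (hQ : Q = (2 * Complex.I * (Real.sqrt q : ℂ) * ((q : ℂ) - 1) -
        ((q : ℂ) ^ 2 - 3 * (q : ℂ) + 1)) / ((q : ℂ) ^ 2 - (q : ℂ) + 1))
    (a : ℤ → ℂ) (ha0 : a 0 = 0)
    (ha1 : a 1 = Complex.I * ((Real.sqrt q : ℂ))⁻¹)
    (ham1 : a (-1) = -(Complex.I * ((Real.sqrt q : ℂ))⁻¹))
    (ha2 : a 2 = (Q + 1) * (Complex.I * ((Real.sqrt q : ℂ))⁻¹))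
    (harec : ∀ n : ℤ, a (n + 2) = (Q + 1) * a n - Q * a (n - 2)) :
    (a 0).im * Real.sqrt q = 0 ∧ (a 1).im * Real.sqrt q = 1 ∧
    ∀ n : ℤ,
      (Odd n → (a (n + 1)).im * Real.sqrt q =
        2 * (q / (q ^ 2 - q + 1)) * ((a n).im * Real.sqrt q) -
          (a (n - 1)).im * Real.sqrt q) ∧
      (Even n → (a (n + 1)).im * Real.sqrt q =
        2 * ((a n).im * Real.sqrt q) - (a (n - 1)).im * Real.sqrt q) := by
  replace hQ : qRatio q = Q := hQ.symm
  set D : ℝ := (q - 1)⁻¹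
  set c : ℤ → ℝ := fun n => if Even n then 2 else 2 * (q / (q ^ 2 - q + 1))
  have hfix := qRatio_add_one_mul_I_div_sqrt hq0 hq1.ne
  have hz := qRatio_add_one_mul_inv_sub_one hq0 hq1.ne
  rw [hQ] at hfix hz
  have hb : ∀ n, a (n + 2) + D = Q * (a n + D) :=
    add_two_add_eq_mul_of_recurrence _ harec
      (by rw [ha1, ham1]; linear_combination hfix) (by rw [ha2, ha0]; linear_combination hfix)
  have hmix : ∀ n, (a (n + 1) + D) + (a (n - 1) + D) = c n * (a n + D) := by
    have hc0 : c 0 = 2 := by simp [c]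
    have hc1 : c 1 = 2 * (q / (q ^ 2 - q + 1)) := by simp [c]
    refine add_one_add_sub_one_eq_mul_of_add_two_eq_mul (b := fun n => a n + D)
      (IsRegular.of_ne_zero (hQ ▸ qRatio_ne_zero hq0)).left hb (fun n => by simp [c])
      (by rw [ha1, ham1, ha0, hc0]; push_cast; ring) ?_
    rw [ha2, ha0, ha1, hc1]
    linear_combination hfix + hz
  have him : ∀ n, (a (n + 1)).im + (a (n - 1)).im = c n * (a n).im := fun n => by
    simpa using congrArg im (hmix n)
  refine ⟨by simp [ha0], ?_, fun n => ⟨fun hn => ?_, fun hn => ?_⟩⟩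
  · simpa [ha1] using inv_mul_cancel₀ (Real.sqrt_pos.2 hq0).ne'
  · have h := him n
    simp only [c, if_neg (Int.not_even_iff_odd.2 hn)] at h
    linear_combination √q * h
  · have h := him n
    simp only [c, if_pos hn] at h
    linear_combination √q * h
end
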